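/- Let G be a finite abstract simplicial complex, and consider the integer matrices indexed by the elements of G defined by L(x,y) = 1 if x ∩ y is nonempty and L(x,y) = 0 otherwise, and g(x,y) = ω(x)·ω(y)·χ(U(x) ∩ U(y)). Then L·g is the identity matrix; that is, g is the inverse of the connection matrix L (the Green star identity). -/
import Mathlib


variable {V : Type*} [DecidableEq V]

/-- `ω(x) = (-1)^(dim x) = (-1)^(|x|-1)`. -/
def omegaSgn (x : Finset V) : ℤ := (-1) ^ (x.card - 1)

/-- Euler characteristic of a finite collection of simplices. -/
def chi (A : Finset (Finset V)) : ℤ := ∑ y ∈ A, omegaSgn y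

/-- The star `U(x)` of a simplex `x`, as a finite subcollection of `G`. -/
def starF (G : Finset (Finset V)) (x : Finset V) : Finset (Finset V) :=
  G.filter (fun y => x ⊆ y)

lemma omegaSgn_sq (x : Finset V) : omegaSgn x * omegaSgn x = 1 := by
  unfold omegaSgn
  rw [← pow_add]
  exact Even.neg_one_pow ⟨_, rfl⟩

lemma neg_one_pow_card (y : Finset V) (hy : y.Nonempty) :
    (-1 : ℤ) ^ y.card = -omegaSgn y := by
  unfold omegaSgn
  have h : y.card - 1 + 1 = y.card := Nat.succ_pred_eq_of_pos (Finset.card_pos.2 hy)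
  calc (-1 : ℤ) ^ y.card = (-1) ^ (y.card - 1 + 1) := by rw [h]
    _ = -(-1) ^ (y.card - 1) := by rw [pow_succ]; ring

lemma sum_omega_powerset (s : Finset V) :
    ∑ y ∈ s.powerset.filter (fun y => y.Nonempty), omegaSgn y
      = if s = ∅ then 0 else 1 := by
  have h := Finset.sum_powerset_neg_one_pow_card (x := s)
  rw [← Finset.sum_filter_add_sum_filter_not s.powerset (fun y => y.Nonempty)] at h
  have h1 : ∑ y ∈ s.powerset.filter (fun y => y.Nonempty), (-1 : ℤ) ^ y.card
      = -∑ y ∈ s.powerset.filter (fun y => y.Nonempty), omegaSgn y := by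
    rw [← Finset.sum_neg_distrib]
    refine Finset.sum_congr rfl fun y hy => ?_
    exact neg_one_pow_card y (Finset.mem_filter.1 hy).2
  have h2 : s.powerset.filter (fun y => ¬y.Nonempty) = {∅} := by
    ext y
    simp [Finset.not_nonempty_iff_eq_empty]
    rintro rfl; exact Finset.empty_subset s
  rw [h1, h2] at h
  simp only [Finset.sum_singleton, Finset.card_empty, pow_zero] at h
  by_cases hs : s = ∅
  · subst hs
    rw [if_pos rfl]
    simp [Finset.powerset_empty, Finset.filter_singleton]
  · rw [if_neg hs] at h
    rw [if_neg hs]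
    linarith

lemma sum_omega_meets (x w : Finset V) (hw : w.Nonempty) :
    ∑ y ∈ w.powerset.filter (fun y => (x ∩ y).Nonempty), omegaSgn y
      = if w ⊆ x then 1 else 0 := by
  have hsplit := Finset.sum_filter_add_sum_filter_not
    (w.powerset.filter (fun y => y.Nonempty)) (fun y => (x ∩ y).Nonempty) omegaSgn
  have e1 : (w.powerset.filter (fun y => y.Nonempty)).filter (fun y => (x ∩ y).Nonempty)
      = w.powerset.filter (fun y => (x ∩ y).Nonempty) := by
    ext y
    simp only [Finset.mem_filter, Finset.mem_powerset]
    constructor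
    · rintro ⟨⟨h1, _⟩, h3⟩; exact ⟨h1, h3⟩
    · rintro ⟨h1, h3⟩
      exact ⟨⟨h1, h3.mono Finset.inter_subset_right⟩, h3⟩
  have e2 : (w.powerset.filter (fun y => y.Nonempty)).filter (fun y => ¬(x ∩ y).Nonempty)
      = (w \ x).powerset.filter (fun y => y.Nonempty) := by
    ext y
    simp only [Finset.mem_filter, Finset.mem_powerset, Finset.not_nonempty_iff_eq_empty,
      ← Finset.disjoint_iff_inter_eq_empty, Finset.subset_sdiff]
    tauto
  rw [e1, e2, sum_omega_powerset, sum_omega_powerset,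
    if_neg (Finset.nonempty_iff_ne_empty.1 hw)] at hsplit
  have hiff : w \ x = ∅ ↔ w ⊆ x := Finset.sdiff_eq_empty_iff_subset
  simp only [hiff] at hsplit
  split_ifs at hsplit ⊢ with h1 <;> linarith

lemma sum_omega_between (x z : Finset V) (hz : z.Nonempty) :
    ∑ w ∈ x.powerset.filter (fun w => z ⊆ w), omegaSgn w
      = if x = z then omegaSgn z else 0 := by
  by_cases hzx : z ⊆ x
  · have key : ∑ w ∈ x.powerset.filter (fun w => z ⊆ w), omegaSgn w
        = ∑ t ∈ (x \ z).powerset, omegaSgn (t ∪ z) := by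
      refine (Finset.sum_nbij' (fun w => w \ z) (fun t => t ∪ z) ?_ ?_ ?_ ?_ ?_).symm.symm
      · intro w hw
        simp only [Finset.mem_filter, Finset.mem_powerset] at hw ⊢
        exact Finset.sdiff_subset_sdiff hw.1 le_rfl
      · intro t ht
        simp only [Finset.mem_powerset] at ht
        simp only [Finset.mem_filter, Finset.mem_powerset]
        exact ⟨Finset.union_subset (ht.trans (Finset.sdiff_subset)) hzx,
          Finset.subset_union_right⟩
      · intro w hw
        simp only [Finset.mem_filter] at hw
        exact Finset.sdiff_union_of_subset hw.2
      · intro t ht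
        simp only [Finset.mem_powerset] at ht
        have hd : Disjoint t z := Finset.disjoint_of_subset_left ht (Finset.sdiff_disjoint)
        show (t ∪ z) \ z = t
        rw [Finset.union_sdiff_cancel_right hd]
      · intro w hw
        simp only [Finset.mem_filter] at hw
        rw [Finset.sdiff_union_of_subset hw.2]
    rw [key]
    have step : ∀ t ∈ (x \ z).powerset, omegaSgn (t ∪ z) = (-1) ^ t.card * omegaSgn z := by
      intro t ht
      simp only [Finset.mem_powerset] at ht
      have hdisj : Disjoint t z := Finset.disjoint_of_subset_left ht (Finset.sdiff_disjoint)
      unfold omegaSgn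
      rw [Finset.card_union_of_disjoint hdisj, ← pow_add]
      have h1 : 1 ≤ z.card := Finset.card_pos.2 hz
      congr 1
      omega
    rw [Finset.sum_congr rfl step, ← Finset.sum_mul, Finset.sum_powerset_neg_one_pow_card]
    have hiff : x \ z = ∅ ↔ x = z := by
      rw [Finset.sdiff_eq_empty_iff_subset]
      exact ⟨fun h => Finset.Subset.antisymm h hzx, fun h => h ▸ le_rfl⟩
    simp only [hiff]
    split_ifs with h1 <;> ring
  · rw [Finset.sum_eq_zero, if_neg]
    · intro h; exact hzx (h ▸ le_rfl)
    · intro w hw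
      simp only [Finset.mem_filter, Finset.mem_powerset] at hw
      exact absurd (hw.2.trans hw.1) hzx

lemma chi_star_inter (G : Finset (Finset V)) (y z : Finset V) :
    chi (starF G y ∩ starF G z) = ∑ w ∈ G, if y ⊆ w ∧ z ⊆ w then omegaSgn w else 0 := by
  unfold chi starF
  rw [← Finset.filter_and, Finset.sum_filter]

/-- Green star identity: the matrix `g(x,y) = ω(x) ω(y) χ(U(x) ∩ U(y))` is the
inverse of the connection matrix `L(x,y) = 1` iff `x ∩ y ≠ ∅` (else `0`). -/
theorem stmt10 (G : Finset (Finset V))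
    (hne : ∀ x ∈ G, x.Nonempty)
    (hdown : ∀ x ∈ G, ∀ y ⊆ x, y.Nonempty → y ∈ G) :
    (Matrix.of fun x y : {z : Finset V // z ∈ G} =>
        if (x.1 ∩ y.1).Nonempty then (1 : ℤ) else 0) *
      (Matrix.of fun x y : {z : Finset V // z ∈ G} =>
        omegaSgn x.1 * omegaSgn y.1 * chi (starF G x.1 ∩ starF G y.1)) = 1 := by
  ext ⟨x, hx⟩ ⟨z, hz⟩
  rw [Matrix.mul_apply, Matrix.one_apply]
  simp only [Matrix.of_apply]
  have hsub : (∑ y : {w : Finset V // w ∈ G},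
      (if (x ∩ y.1).Nonempty then (1 : ℤ) else 0) *
        (omegaSgn y.1 * omegaSgn z * chi (starF G y.1 ∩ starF G z)))
      = ∑ y ∈ G, (if (x ∩ y).Nonempty then (1 : ℤ) else 0) *
          (omegaSgn y * omegaSgn z * chi (starF G y ∩ starF G z)) :=
    Finset.sum_coe_sort G (fun y => (if (x ∩ y).Nonempty then (1 : ℤ) else 0) *
      (omegaSgn y * omegaSgn z * chi (starF G y ∩ starF G z)))
  rw [hsub]
  have step1 : ∀ y ∈ G,
      (if (x ∩ y).Nonempty then (1 : ℤ) else 0) *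
          (omegaSgn y * omegaSgn z * chi (starF G y ∩ starF G z))
      = ∑ w ∈ G, (if (x ∩ y).Nonempty ∧ y ⊆ w ∧ z ⊆ w then
          omegaSgn y * omegaSgn z * omegaSgn w else 0) := by
    intro y _
    rw [chi_star_inter, Finset.mul_sum, Finset.mul_sum]
    refine Finset.sum_congr rfl fun w _ => ?_
    by_cases hA : (x ∩ y).Nonempty <;> by_cases hB : y ⊆ w ∧ z ⊆ w <;>
      simp [hA, hB] <;> ring
  rw [Finset.sum_congr rfl step1, Finset.sum_comm]
  have step2 : ∀ w ∈ G,
      (∑ y ∈ G, if (x ∩ y).Nonempty ∧ y ⊆ w ∧ z ⊆ w then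
          omegaSgn y * omegaSgn z * omegaSgn w else 0)
      = if z ⊆ w ∧ w ⊆ x then omegaSgn z * omegaSgn w else 0 := by
    intro w hw
    have inner : (∑ y ∈ G, if (x ∩ y).Nonempty ∧ y ⊆ w ∧ z ⊆ w then
        omegaSgn y * omegaSgn z * omegaSgn w else 0)
        = (if z ⊆ w then (1:ℤ) else 0) * (omegaSgn z * omegaSgn w) *
            ∑ y ∈ w.powerset.filter (fun y => (x ∩ y).Nonempty), omegaSgn y := by
      by_cases hzw : z ⊆ w
      · rw [if_pos hzw, one_mul, Finset.mul_sum]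
        rw [← Finset.sum_filter]
        have eset : G.filter (fun y => (x ∩ y).Nonempty ∧ y ⊆ w ∧ z ⊆ w)
            = w.powerset.filter (fun y => (x ∩ y).Nonempty) := by
          ext y
          simp only [Finset.mem_filter, Finset.mem_powerset]
          constructor
          · rintro ⟨_, h2, h3, _⟩; exact ⟨h3, h2⟩
          · rintro ⟨h1, h2⟩
            exact ⟨hdown w hw y h1 (h2.mono Finset.inter_subset_right), h2, h1, hzw⟩
        rw [eset]
        refine Finset.sum_congr rfl fun y _ => ?_
        ring
      · rw [if_neg hzw, zero_mul, zero_mul]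
        refine Finset.sum_eq_zero fun y _ => ?_
        rw [if_neg]
        rintro ⟨_, _, h3⟩; exact hzw h3
    rw [inner, sum_omega_meets x w (hne w hw)]
    by_cases hzw : z ⊆ w <;> by_cases hwx : w ⊆ x <;>
      simp [hzw, hwx]
  rw [Finset.sum_congr rfl step2]
  have hzne : z.Nonempty := hne z hz
  have eset2 : G.filter (fun w => z ⊆ w ∧ w ⊆ x)
      = x.powerset.filter (fun w => z ⊆ w) := by
    ext w
    simp only [Finset.mem_filter, Finset.mem_powerset]
    constructor
    · rintro ⟨_, h2, h3⟩; exact ⟨h3, h2⟩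
    · rintro ⟨h1, h2⟩
      exact ⟨hdown x hx w h1 (hzne.mono h2), h2, h1⟩
  rw [← Finset.sum_filter, eset2, ← Finset.mul_sum, sum_omega_between x z hzne]
  simp only [Subtype.mk.injEq]
  split_ifs with h
  · subst h; rw [omegaSgn_sq]
  · exact mul_zero _
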